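/- arXiv:0812.2734 — 2 statements merged into one kernel-verified Lean document; each statement's English description precedes it below -/
import Mathlib

section
/- A rooted path graph contains no weak asteroidal quadruple. -/
open SimpleGraph

variable {V : Type*}

/-- A graph is chordal if it contains no induced cycle of length at least four. -/
def IsChordal (G : SimpleGraph V) : Prop :=
  ∀ n : ℕ, 4 ≤ n → IsEmpty (SimpleGraph.cycleGraph n ↪g G)

/-- `S` separates `u` from `v`: every walk from `u` to `v` meets `S`, and `u, v ∉ S`. -/
def IsSeparator (G : SimpleGraph V) (u v : V) (S : Set V) : Prop :=
  u ∉ S ∧ v ∉ S ∧ ∀ p : G.Walk u v, ∃ x ∈ p.support, x ∈ S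

/-- A `{u,v}`-separator: a separator of `u,v` minimal with this property. -/
def IsMinUVSeparator (G : SimpleGraph V) (u v : V) (S : Set V) : Prop :=
  IsSeparator G u v S ∧ ∀ T, T ⊂ S → ¬ IsSeparator G u v T

/-- A minimal separator: a `{u,v}`-separator for some non-adjacent pair `u ≠ v`. -/
def IsMinimalSeparator (G : SimpleGraph V) (S : Set V) : Prop :=
  ∃ u v, u ≠ v ∧ ¬ G.Adj u v ∧ IsMinUVSeparator G u v S

/-- A maximal clique. -/
def IsMaxClique (G : SimpleGraph V) (Q : Set V) : Prop :=
  G.IsClique Q ∧ ∀ R, G.IsClique R → Q ⊆ R → Q = R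

abbrev MaxClique (G : SimpleGraph V) := {Q : Set V // IsMaxClique G Q}

/-- A clique tree of `G`: a tree on the maximal cliques of `G` such that for every
vertex `v` the maximal cliques containing `v` induce a (nonempty connected) subtree. -/
structure CliqueTree (G : SimpleGraph V) where
  tree : SimpleGraph (MaxClique G)
  isTree : tree.IsTree
  subtree : ∀ v : V, ((tree.induce {Q : MaxClique G | v ∈ Q.1})).Connected

/-- An asteroidal triple: three pairwise non-adjacent vertices such that any two are
joined by a path avoiding the closed neighborhood of the third. -/
def IsAsteroidalTriple (G : SimpleGraph V) (a b c : V) : Prop :=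
  a ≠ b ∧ b ≠ c ∧ a ≠ c ∧ ¬ G.Adj a b ∧ ¬ G.Adj b c ∧ ¬ G.Adj a c ∧
  (∃ p : G.Walk a b, ∀ x ∈ p.support, x ≠ c ∧ ¬ G.Adj c x) ∧
  (∃ p : G.Walk b c, ∀ x ∈ p.support, x ≠ a ∧ ¬ G.Adj a x) ∧
  (∃ p : G.Walk a c, ∀ x ∈ p.support, x ≠ b ∧ ¬ G.Adj b x)
/-- A chordless (induced) path `x 0 - x 1 - ⋯ - x n`: injective, with adjacency exactly
between consecutive vertices. -/
def IsChordlessPathFun (G : SimpleGraph V) {n : ℕ} (x : Fin (n+1) → V) : Prop :=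
  Function.Injective x ∧ ∀ i j : Fin (n+1), i < j → (G.Adj (x i) (x j) ↔ (j : ℕ) = (i : ℕ) + 1)

/-- Attachment of type 1 on `{l1,l2}, {r1,r2}` using vertices of `Z`. -/
def Attach1 (G : SimpleGraph V) (Z : Set V) (l1 l2 r1 r2 : V) : Prop :=
  ∃ z ∈ Z, ∃ z' ∈ Z, z ≠ z' ∧ ¬ G.Adj z z' ∧
    G.Adj z l1 ∧ G.Adj z l2 ∧ G.Adj z r1 ∧ ¬ G.Adj z r2 ∧
    G.Adj z' r1 ∧ G.Adj z' r2 ∧ G.Adj z' l1 ∧ ¬ G.Adj z' l2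

/-- Attachment of type 2 on `{l1,l2}, {r1,r2}` using vertices of `Z`, relative to the
set `P = X ∪ Y ∪ {u,v}` of path vertices.  Here `z 0 = l1`, `z (last) = r1` and the
interior values of `z` are the `2t+1` clique vertices; `z' k` sees exactly
`z k.castSucc` and `z k.succ`. -/
def Attach2 (G : SimpleGraph V) (Z P : Set V) (l1 l2 r1 r2 : V) : Prop :=
  ∃ (t : ℕ) (z : Fin (2*t+3) → V) (z' : Fin (2*t+2) → V),
    z 0 = l1 ∧ z (Fin.last (2*t+2)) = r1 ∧
    Function.Injective z ∧ Function.Injective z' ∧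
    (∀ k : Fin (2*t+3), k ≠ 0 → k ≠ Fin.last (2*t+2) → z k ∈ Z) ∧
    (∀ k, z' k ∈ Z) ∧
    G.IsClique ({l1, l2, r1, r2} ∪
      {w | ∃ k : Fin (2*t+3), k ≠ 0 ∧ k ≠ Fin.last (2*t+2) ∧ z k = w}) ∧
    (∀ k : Fin (2*t+3), k ≠ 0 → k ≠ Fin.last (2*t+2) → ∀ w ∈ P,
      (G.Adj (z k) w ↔ w = l1 ∨ w = l2 ∨ w = r1 ∨ w = r2)) ∧
    (∀ k m : Fin (2*t+2), k ≠ m → ¬ G.Adj (z' k) (z' m)) ∧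
    (∀ k : Fin (2*t+2), ∀ w,
      w ∈ P ∪ ({l1, l2, r1, r2} ∪
        {w | ∃ k : Fin (2*t+3), k ≠ 0 ∧ k ≠ Fin.last (2*t+2) ∧ z k = w}) →
      (G.Adj (z' k) w ↔ w = z k.castSucc ∨ w = z k.succ))

/-- Two non-adjacent vertices `u, v` are linked by a strong path: either they have a
common neighbor, or there are two chordless paths `u-x₁-⋯-x_r-v`, `u-y₁-⋯-y_s-v`
(`r,s ≥ 2`) with disjoint interiors, and a set `Z` disjoint from them, such that every
clique of size four `x_i, x_{i+1}, y_j, y_{j+1}` carries an attachment of type 1 or 2. -/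
def LinkedByStrongPath (G : SimpleGraph V) (u v : V) : Prop :=
  (∃ w, G.Adj u w ∧ G.Adj v w) ∨
  (∃ (r s : ℕ), 2 ≤ r ∧ 2 ≤ s ∧
    ∃ (x : Fin (r+2) → V) (y : Fin (s+2) → V) (Z : Set V),
      x 0 = u ∧ x (Fin.last (r+1)) = v ∧ y 0 = u ∧ y (Fin.last (s+1)) = v ∧
      IsChordlessPathFun G x ∧ IsChordlessPathFun G y ∧
      (∀ i : Fin (r+2), i ≠ 0 → i ≠ Fin.last (r+1) →
        ∀ j : Fin (s+2), j ≠ 0 → j ≠ Fin.last (s+1) → x i ≠ y j) ∧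
      Z ∩ (Set.range x ∪ Set.range y) = ∅ ∧
      ∀ i j : ℕ, ∀ _hi1 : 1 ≤ i, ∀ _hi2 : i + 1 ≤ r, ∀ _hj1 : 1 ≤ j, ∀ _hj2 : j + 1 ≤ s,
        G.Adj (x ⟨i, by omega⟩) (y ⟨j, by omega⟩) →
        G.Adj (x ⟨i, by omega⟩) (y ⟨j+1, by omega⟩) →
        G.Adj (x ⟨i+1, by omega⟩) (y ⟨j, by omega⟩) →
        G.Adj (x ⟨i+1, by omega⟩) (y ⟨j+1, by omega⟩) →
        ∃ l1 l2 r1 r2 : V,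
          ((l1 = x ⟨i, by omega⟩ ∧ l2 = y ⟨j, by omega⟩) ∨
           (l1 = y ⟨j, by omega⟩ ∧ l2 = x ⟨i, by omega⟩)) ∧
          ((r1 = x ⟨i+1, by omega⟩ ∧ r2 = y ⟨j+1, by omega⟩) ∨
           (r1 = y ⟨j+1, by omega⟩ ∧ r2 = x ⟨i+1, by omega⟩)) ∧
          (Attach1 G Z l1 l2 r1 r2 ∨
           Attach2 G Z (Set.range x ∪ Set.range y) l1 l2 r1 r2))

/-- A strong asteroidal triple: an asteroidal triple each pair of which is linked by a
strong path. -/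
def IsStrongAsteroidalTriple (G : SimpleGraph V) (a b c : V) : Prop :=
  IsAsteroidalTriple G a b c ∧
    LinkedByStrongPath G a b ∧ LinkedByStrongPath G b c ∧ LinkedByStrongPath G a c

/-- A weak asteroidal triple: an asteroidal triple some pair of which is linked by a
strong path. -/
def IsWeakAsteroidalTriple (G : SimpleGraph V) (a b c : V) : Prop :=
  IsAsteroidalTriple G a b c ∧
    (LinkedByStrongPath G a b ∨ LinkedByStrongPath G b c ∨ LinkedByStrongPath G a c)

/-- An asteroidal quadruple: four vertices any three of which form an asteroidal triple. -/
def IsAsteroidalQuadruple (G : SimpleGraph V) (a b c d : V) : Prop :=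
  IsAsteroidalTriple G a b c ∧ IsAsteroidalTriple G a b d ∧
  IsAsteroidalTriple G a c d ∧ IsAsteroidalTriple G b c d

/-- A weak asteroidal quadruple: four vertices any three of which form a weak
asteroidal triple. -/
def IsWeakAsteroidalQuadruple (G : SimpleGraph V) (a b c d : V) : Prop :=
  IsWeakAsteroidalTriple G a b c ∧ IsWeakAsteroidalTriple G a b d ∧
  IsWeakAsteroidalTriple G a c d ∧ IsWeakAsteroidalTriple G b c d

/-- A clique directed path tree: a clique tree together with an orientation `D` of its
edges such that for every vertex `w` of `G`, the cliques containing `w` form a directed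
path. -/
structure CliqueDPT (G : SimpleGraph V) extends CliqueTree G where
  D : MaxClique G → MaxClique G → Prop
  dadj : ∀ Q R, D Q R → tree.Adj Q R
  total : ∀ Q R, tree.Adj Q R → D Q R ∨ D R Q
  antisymm : ∀ Q R, D Q R → ¬ D R Q
  dirpath : ∀ w : V, ∃ (n : ℕ) (e : Fin (n+1) ≃ {Q : MaxClique G // w ∈ Q.1}),
    ∀ i : Fin n, D (e i.castSucc).1 (e i.succ).1

/-- A clique rooted path tree: a clique directed path tree whose orientation makes the
tree rooted (every clique is reachable from the root along directed edges). -/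
structure CliqueRPT (G : SimpleGraph V) extends CliqueDPT G where
  root : MaxClique G
  rooted : ∀ Q, Relation.ReflTransGen D root Q

/-- A directed path graph: a graph having a clique directed path tree. -/
def DirectedPathGraph (G : SimpleGraph V) : Prop := Nonempty (CliqueDPT G)

/-- A rooted path graph: a graph having a clique rooted path tree. -/
def RootedPathGraph (G : SimpleGraph V) : Prop := Nonempty (CliqueRPT G)

/-- `T(u,v)` is a directed path: the tree path between the closest cliques containing
`u` resp. `v` (characterized by: `u` only in its first vertex, `v` only in its last)
has all its edges oriented in the same direction. -/
def TuvDirected (G : SimpleGraph V) (T : CliqueDPT G) (u v : V) : Prop :=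
  ∃ (n : ℕ) (p : Fin (n+1) → MaxClique G),
    Function.Injective p ∧
    u ∈ (p 0).1 ∧ v ∈ (p (Fin.last n)).1 ∧
    (∀ i, i ≠ (0 : Fin (n+1)) → u ∉ (p i).1) ∧
    (∀ i, i ≠ Fin.last n → v ∉ (p i).1) ∧
    ((∀ i : Fin n, T.D (p i.castSucc) (p i.succ)) ∨
     (∀ i : Fin n, T.D (p i.succ) (p i.castSucc)))


/-!
Fix a clique rooted path tree `T` and let `topDepth γ` be the depth of the highest clique
containing `γ`. The cliques containing a vertex form a directed path of `T`, so they are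
pairwise comparable for the ancestor order.

If `u` and `v` are linked by a strong path, then some clique of `u` and some clique of `v` are
comparable. For a common neighbour this is the remark above. Otherwise let `W` be the deepest
common ancestor of a clique of `u` and a clique of `v`, with children `p` towards `u` and `q`
towards `v`. Both chordless paths from `u` to `v` must pass from `W ∩ p` to `W ∩ q`, and since
they are chordless they do so along single edges `x_i x_{i+1}` and `y_j y_{j+1}`. These four
vertices form a clique of `W`, and its attachment cannot be placed in the tree: for type 1,
the two cliques through the attachment vertices are ancestors of `W`, and the lower one
contains a vertex it must not see; for type 2, the cliques through the two extreme
attachment vertices must lie above the clique `W'` of the attachment, since below it they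
would block the walks from the corners to `u` or `v`, and then the lower one again contains
a vertex it must not see.

Now if a clique `X ∋ u` is an ancestor of a clique `Y ∋ v` and `{u, v, z}` is asteroidal, the
walk from `v` to `z` avoiding `N[u]` never meets `X`, so every clique of `z` lies strictly
below `X` and `topDepth u < topDepth z`. In a weak asteroidal quadruple the other three
vertices form a weak asteroidal triple, so applying this to the vertex of least `topDepth`
gives a contradiction.
-/

lemma SimpleGraph.Walk.forall_mem_support_reverse {G : SimpleGraph V} {a b : V} {P : V → Prop}
    {w : G.Walk a b} (h : ∀ x ∈ w.support, P x) : ∀ x ∈ w.reverse.support, P x :=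
  fun x hx => h x (by rwa [Walk.support_reverse, List.mem_reverse] at hx)

section MaxClique

variable {G : SimpleGraph V}

lemma exists_maxClique_superset {S : Set V} (hS : G.IsClique S) :
    ∃ Q : MaxClique G, S ⊆ Q.1 := by
  obtain ⟨Q, hSQ, hQ⟩ := zorn_subset_nonempty {R : Set V | G.IsClique R}
    (fun C hC hchain _ => ⟨⋃₀ C, (isClique_sUnion hchain.directedOn).2 hC,
      fun _ => Set.subset_sUnion_of_mem⟩) S hS
  exact ⟨⟨Q, hQ.prop, fun R hR hQR => hQR.antisymm (hQ.le_of_ge hR hQR)⟩, hSQ⟩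

lemma exists_maxClique_mem (a : V) : ∃ Q : MaxClique G, a ∈ Q.1 :=
  (exists_maxClique_superset (G.isClique_singleton a)).imp fun _ h => h rfl

lemma exists_maxClique_mem_mem {a b : V} (h : G.Adj a b) :
    ∃ Q : MaxClique G, a ∈ Q.1 ∧ b ∈ Q.1 :=
  (exists_maxClique_superset (G.isClique_pair.2 fun _ => h)).imp fun _ h =>
    ⟨h (by simp), h (by simp)⟩

lemma exists_maxClique_insert (W : MaxClique G) {S : Set V} {a : V} (hS : S ⊆ W.1)
    (ha : ∀ b ∈ S, a ≠ b → G.Adj a b) : ∃ M : MaxClique G, a ∈ M.1 ∧ S ⊆ M.1 :=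
  (exists_maxClique_superset ((W.2.1.subset hS).insert ha)).imp fun _ h =>
    ⟨h (Set.mem_insert a S), (Set.subset_insert a S).trans h⟩

lemma MaxClique.adj (Q : MaxClique G) {a b : V} (ha : a ∈ Q.1) (hb : b ∈ Q.1) (hne : a ≠ b) :
    G.Adj a b :=
  Q.2.1 ha hb hne

lemma transfer_along_walk (Φ : MaxClique G → Prop) {S : Set V}
    (hΦ : ∀ γ ∉ S, ∀ X Y : MaxClique G, γ ∈ X.1 → γ ∈ Y.1 → Φ X → Φ Y)
    {α β : V} (w : G.Walk α β) (hw : ∀ γ ∈ w.support, γ ∉ S)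
    {X Y : MaxClique G} (hX : α ∈ X.1) (hY : β ∈ Y.1) (h : Φ X) : Φ Y := by
  induction w generalizing X with
  | nil => exact hΦ _ (hw _ (Walk.start_mem_support _)) X Y hX hY h
  | cons hadj w ih =>
    obtain ⟨N, hN, hN'⟩ := exists_maxClique_mem_mem hadj
    refine ih (fun γ hγ => hw γ (List.mem_cons_of_mem _ hγ)) hN' hY ?_
    exact hΦ _ (hw _ (Walk.start_mem_support _)) X N hX hN h

end MaxClique

namespace CliqueRPT

variable {G : SimpleGraph V} (T : CliqueRPT G)

noncomputable def rootPath (Q : MaxClique G) : T.tree.Walk T.root Q :=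
  (T.isTree.existsUnique_path T.root Q).choose

lemma rootPath_isPath (Q : MaxClique G) : (T.rootPath Q).IsPath :=
  (T.isTree.existsUnique_path T.root Q).choose_spec.1

lemma eq_rootPath {Q : MaxClique G} (p : T.tree.Walk T.root Q) (hp : p.IsPath) :
    p = T.rootPath Q :=
  (T.isTree.existsUnique_path T.root Q).choose_spec.2 p hp

def Anc (X Q : MaxClique G) : Prop := X ∈ (T.rootPath Q).support

noncomputable def depth (Q : MaxClique G) : ℕ := (T.rootPath Q).length

def IsParent (P Q : MaxClique G) : Prop := T.tree.Adj P Q ∧ T.Anc P Q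

noncomputable def topDepth (γ : V) : ℕ :=
  sInf {n | ∃ Q : MaxClique G, γ ∈ Q.1 ∧ T.depth Q = n}

def AncRelated (u v : V) : Prop :=
  ∃ X Y : MaxClique G, u ∈ X.1 ∧ v ∈ Y.1 ∧ (T.Anc X Y ∨ T.Anc Y X)

variable {T}

section Ancestors

lemma anc_refl (Q : MaxClique G) : T.Anc Q Q := Walk.end_mem_support _

lemma root_anc (Q : MaxClique G) : T.Anc T.root Q := Walk.start_mem_support _

lemma takeUntil_rootPath {X Q : MaxClique G} (h : T.Anc X Q) :
    (T.rootPath Q).takeUntil X h = T.rootPath X :=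
  T.eq_rootPath _ ((T.rootPath_isPath Q).takeUntil h)

lemma Anc.trans {X Y Z : MaxClique G} (h1 : T.Anc X Y) (h2 : T.Anc Y Z) : T.Anc X Z := by
  have h3 : X ∈ ((T.rootPath Z).takeUntil Y h2).support := by
    rw [takeUntil_rootPath h2]; exact h1
  exact Walk.support_takeUntil_subset_support _ _ h3

lemma Anc.depth_le {X Q : MaxClique G} (h : T.Anc X Q) : T.depth X ≤ T.depth Q := by
  rw [depth, depth, ← takeUntil_rootPath h]
  exact Walk.length_takeUntil_le_length _ _

lemma Anc.depth_lt {X Q : MaxClique G} (h : T.Anc X Q) (hne : X ≠ Q) :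
    T.depth X < T.depth Q := by
  have hspec := congrArg Walk.length (Walk.take_spec (T.rootPath Q) h)
  rw [Walk.length_append, takeUntil_rootPath h] at hspec
  have hpos : ((T.rootPath Q).dropUntil X h).length ≠ 0 := fun h0 =>
    hne (Walk.eq_of_length_eq_zero h0)
  rw [depth, depth]
  omega

lemma Anc.antisymm {X Y : MaxClique G} (h1 : T.Anc X Y) (h2 : T.Anc Y X) : X = Y := by
  by_contra hne
  exact absurd (h1.depth_lt hne) (not_lt.2 h2.depth_le)

lemma anc_of_mem_dropUntil {X Q Y : MaxClique G} (hX : T.Anc X Q)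
    (hY : Y ∈ ((T.rootPath Q).dropUntil X hX).support) : T.Anc X Y := by
  set d := (T.rootPath Q).dropUntil X hX
  have hpath : ((T.rootPath X).append (d.takeUntil Y hY)).IsPath := by
    have hnd := (T.rootPath_isPath Q).support_nodup
    rw [← Walk.take_spec (T.rootPath Q) hX, Walk.support_append, takeUntil_rootPath hX] at hnd
    have htail : (d.takeUntil Y hY).support.tail.Sublist d.support.tail := by
      conv_rhs => rw [← Walk.take_spec d hY, Walk.support_append]
      rw [← Walk.cons_tail_support (d.takeUntil Y hY), List.cons_append, List.tail_cons,
        List.tail_cons]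
      exact List.sublist_append_left _ _
    rw [Walk.isPath_def, Walk.support_append]
    exact hnd.sublist (htail.append_left _)
  show X ∈ (T.rootPath Y).support
  rw [← T.eq_rootPath _ hpath, Walk.mem_support_append_iff]
  exact Or.inl (Walk.end_mem_support _)

lemma anc_total_of_anc {X Y Q : MaxClique G} (hX : T.Anc X Q) (hY : T.Anc Y Q) :
    T.Anc X Y ∨ T.Anc Y X := by
  have h : Y ∈ (T.rootPath Q).support := hY
  rw [← Walk.take_spec (T.rootPath Q) hX, Walk.mem_support_append_iff,
    takeUntil_rootPath hX] at h
  exact h.elim Or.inr fun h => Or.inl (anc_of_mem_dropUntil hX h)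

lemma rootPath_eq_concat {P Q : MaxClique G} (h : T.tree.Adj P Q) (hQP : ¬ T.Anc Q P) :
    T.rootPath Q = (T.rootPath P).concat h := by
  refine (T.eq_rootPath _ ?_).symm
  rw [Walk.isPath_def, Walk.support_concat, List.nodup_append]
  exact ⟨(T.rootPath_isPath P).support_nodup, List.nodup_singleton _,
    fun a ha b hb hab => hQP (by rw [List.mem_singleton.1 hb] at hab; exact hab ▸ ha)⟩

lemma IsParent.not_anc {P Q : MaxClique G} (h : T.IsParent P Q) : ¬ T.Anc Q P :=
  fun hQP => h.1.ne (h.2.antisymm hQP)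

lemma isParent_or_isParent {P Q : MaxClique G} (h : T.tree.Adj P Q) :
    T.IsParent P Q ∨ T.IsParent Q P := by
  by_cases hQP : T.Anc Q P
  · exact Or.inr ⟨h.symm, hQP⟩
  · refine Or.inl ⟨h, ?_⟩
    show P ∈ (T.rootPath Q).support
    rw [rootPath_eq_concat h hQP, Walk.support_concat]
    exact List.mem_append_left _ (Walk.end_mem_support _)

lemma IsParent.anc_iff {P Q X : MaxClique G} (h : T.IsParent P Q) :
    T.Anc X Q ↔ T.Anc X P ∨ X = Q := by
  rw [Anc, Anc, rootPath_eq_concat h.1 h.not_anc, Walk.support_concat, List.mem_append,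
    List.mem_singleton]

lemma IsParent.depth_eq {P Q : MaxClique G} (h : T.IsParent P Q) :
    T.depth Q = T.depth P + 1 := by
  rw [depth, depth, rootPath_eq_concat h.1 h.not_anc, Walk.length_concat]

lemma IsParent.unique {P P' Q : MaxClique G} (h : T.IsParent P Q) (h' : T.IsParent P' Q) :
    P = P' := by
  rcases h'.anc_iff.1 h.2 with h1 | h1
  · rcases h.anc_iff.1 h'.2 with h2 | h2
    · exact h1.antisymm h2
    · exact absurd h2 h'.1.ne
  · exact absurd h1 h.1.ne

lemma exists_isParent_anc {W Q : MaxClique G} (h : T.Anc W Q) (hne : W ≠ Q) :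
    ∃ p, T.IsParent W p ∧ T.Anc p Q := by
  obtain ⟨p, hadj, rest, hrest⟩ := Walk.exists_eq_cons_of_ne hne ((T.rootPath Q).dropUntil W h)
  have hp : p ∈ ((T.rootPath Q).dropUntil W h).support := by
    rw [hrest, Walk.support_cons]
    exact List.mem_cons_of_mem _ (Walk.start_mem_support _)
  exact ⟨p, ⟨hadj, anc_of_mem_dropUntil h hp⟩, Walk.support_dropUntil_subset_support _ _ hp⟩

lemma IsParent.not_anc_of_ne {W p q : MaxClique G} (hp : T.IsParent W p)
    (hq : T.IsParent W q) (hpq : p ≠ q) : ¬ T.Anc p q := by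
  intro h
  rcases hq.anc_iff.1 h with h2 | h2
  · exact hp.not_anc h2
  · exact hpq h2

lemma anc_of_treeWalk {K X Y : MaxClique G} (w : T.tree.Walk X Y) (hK : T.Anc K X)
    (hKw : K ∉ w.support) : T.Anc K Y := by
  induction w with
  | nil => exact hK
  | cons hadj w ih =>
    rw [Walk.support_cons, List.mem_cons, not_or] at hKw
    rcases isParent_or_isParent hadj with h | h
    · exact ih (h.anc_iff.2 (Or.inl hK)) hKw.2
    · exact ih ((h.anc_iff.1 hK).resolve_right hKw.1) hKw.2

lemma IsParent.mem_support_of_treeWalk {P Q X Y : MaxClique G} (hPQ : T.IsParent P Q)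
    (w : T.tree.Walk X Y) (hX : ¬ T.Anc Q X) (hY : T.Anc Q Y) :
    P ∈ w.support ∧ Q ∈ w.support := by
  induction w with
  | nil => exact absurd hY hX
  | @cons X X' Y hadj w ih =>
    simp only [Walk.support_cons, List.mem_cons]
    by_cases hX' : T.Anc Q X'
    · rcases isParent_or_isParent hadj with h | h
      · obtain rfl : Q = X' := (h.anc_iff.1 hX').resolve_left hX
        obtain rfl := hPQ.unique h
        exact ⟨Or.inl rfl, Or.inr (Walk.start_mem_support w)⟩
      · exact absurd (h.anc_iff.2 (Or.inl hX')) hX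
    · exact (ih hX' hY).imp Or.inr Or.inr

end Ancestors

section Subtrees

lemma rootPath_darts (Q : MaxClique G) : ∀ d ∈ (T.rootPath Q).darts, T.D d.fst d.snd := by
  induction T.rooted Q with
  | refl =>
    rw [← T.eq_rootPath Walk.nil (by simp)]
    simp
  | @tail P Q _ hPQ ih =>
    have hadj := T.dadj _ _ hPQ
    rcases isParent_or_isParent hadj with h | h
    · rw [rootPath_eq_concat hadj h.not_anc, Walk.darts_concat]
      intro d hd
      rw [List.concat_eq_append, List.mem_append, List.mem_singleton] at hd
      rcases hd with hd | rfl
      · exact ih d hd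
      · exact hPQ
    · have hd : (⟨(Q, P), h.1⟩ : T.tree.Dart) ∈ (T.rootPath P).darts := by
        rw [rootPath_eq_concat h.1 h.not_anc, Walk.darts_concat]
        simp
      exact absurd (ih _ hd) (T.antisymm _ _ hPQ)

lemma isParent_of_D {P Q : MaxClique G} (h : T.D P Q) : T.IsParent P Q := by
  refine (isParent_or_isParent (T.dadj _ _ h)).resolve_right fun h' => ?_
  have hd : (⟨(Q, P), h'.1⟩ : T.tree.Dart) ∈ (T.rootPath P).darts := by
    rw [rootPath_eq_concat h'.1 h'.not_anc, Walk.darts_concat]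
    simp
  exact T.antisymm _ _ h (rootPath_darts P _ hd)

lemma anc_total_of_mem {γ : V} {X Y : MaxClique G} (hX : γ ∈ X.1) (hY : γ ∈ Y.1) :
    T.Anc X Y ∨ T.Anc Y X := by
  obtain ⟨n, e, he⟩ := T.dirpath γ
  have key : ∀ i j : Fin (n+1), i ≤ j → T.Anc (e i).1 (e j).1 := by
    intro i j hij
    induction j using Fin.induction with
    | zero => rw [Fin.le_zero_iff.1 hij]; exact anc_refl _
    | succ k ih =>
      rcases hij.lt_or_eq with h | rfl
      · exact (ih (Fin.le_castSucc_iff.2 h)).trans (isParent_of_D (he k)).2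
      · exact anc_refl _
  obtain ⟨i, hi⟩ := e.surjective ⟨X, hX⟩
  obtain ⟨j, hj⟩ := e.surjective ⟨Y, hY⟩
  rcases le_total i j with h | h
  · exact Or.inl (by simpa [hi, hj] using key i j h)
  · exact Or.inr (by simpa [hi, hj] using key j i h)

lemma exists_treeWalk_of_mem {γ : V} {X Y : MaxClique G} (hX : γ ∈ X.1) (hY : γ ∈ Y.1) :
    ∃ w : T.tree.Walk X Y, ∀ Z ∈ w.support, γ ∈ Z.1 := by
  obtain ⟨w⟩ := (T.subtree γ).preconnected ⟨X, hX⟩ ⟨Y, hY⟩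
  let f := (Embedding.induce (G := T.tree) {Q : MaxClique G | γ ∈ Q.1}).toHom
  refine ⟨w.map f, fun Z hZ => ?_⟩
  have hZ' : Z ∈ (w.map f).support := hZ
  rw [Walk.support_map] at hZ'
  obtain ⟨Z', -, rfl⟩ := List.mem_map.1 hZ'
  exact Z'.2

lemma anc_of_mem_of_not_mem {γ : V} {M X Y : MaxClique G} (hγM : γ ∉ M.1) (hX : γ ∈ X.1)
    (hY : γ ∈ Y.1) (h : T.Anc M X) : T.Anc M Y := by
  obtain ⟨w, hw⟩ := exists_treeWalk_of_mem (T := T) hX hY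
  exact anc_of_treeWalk w h fun hM => hγM (hw M hM)

lemma mem_of_anc_of_anc {γ : V} {X Y Z : MaxClique G} (hXY : T.Anc X Y) (hYZ : T.Anc Y Z)
    (hX : γ ∈ X.1) (hZ : γ ∈ Z.1) : γ ∈ Y.1 := by
  by_contra hY
  obtain rfl := (anc_of_mem_of_not_mem hY hZ hX hYZ).antisymm hXY
  exact hY hX

lemma IsParent.mem_of_mem_of_mem {P Q X Y : MaxClique G} (hPQ : T.IsParent P Q) {γ : V}
    (hX : γ ∈ X.1) (hY : γ ∈ Y.1) (hQX : ¬ T.Anc Q X) (hQY : T.Anc Q Y) :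
    γ ∈ P.1 ∧ γ ∈ Q.1 := by
  obtain ⟨w, hw⟩ := exists_treeWalk_of_mem (T := T) hX hY
  obtain ⟨hP, hQ⟩ := hPQ.mem_support_of_treeWalk w hQX hQY
  exact ⟨hw P hP, hw Q hQ⟩

lemma anc_of_walk {M X Y : MaxClique G} {α β : V} (w : G.Walk α β)
    (hw : ∀ γ ∈ w.support, γ ∉ M.1) (hX : α ∈ X.1) (hY : β ∈ Y.1) (h : T.Anc M X) :
    T.Anc M Y :=
  transfer_along_walk (T.Anc M) (fun _ hγ _ _ => anc_of_mem_of_not_mem hγ) w hw hX hY h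

lemma IsParent.exists_mem_of_walk {P Q X Y : MaxClique G} (hPQ : T.IsParent P Q) {α β : V}
    (w : G.Walk α β) (hX : α ∈ X.1) (hQX : ¬ T.Anc Q X) (hY : β ∈ Y.1) (hQY : T.Anc Q Y) :
    ∃ γ ∈ w.support, γ ∈ P.1 ∧ γ ∈ Q.1 := by
  by_contra! h
  refine hQX (transfer_along_walk (T.Anc Q) (S := {γ | γ ∈ P.1 ∧ γ ∈ Q.1}) ?_ w.reverse
    (Walk.forall_mem_support_reverse fun γ hγ hγPQ => h γ hγ hγPQ.1 hγPQ.2) hY hX hQY)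
  intro γ hγ X Y hX hY hQX
  by_contra hQY
  exact hγ (hPQ.mem_of_mem_of_mem hY hX hQY hQX)

variable {W p q : MaxClique G} (hp : T.IsParent W p) (hq : T.IsParent W q) (hpq : p ≠ q)
include hp hq hpq

lemma IsParent.not_anc_of_anc {X : MaxClique G} (hpX : T.Anc p X) : ¬ T.Anc q X := fun hqX =>
  (anc_total_of_anc hpX hqX).elim (hp.not_anc_of_ne hq hpq) (hq.not_anc_of_ne hp hpq.symm)

lemma IsParent.not_mem_of_mem {γ : V} (hγp : γ ∈ p.1) : γ ∉ q.1 := fun hγq =>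
  (anc_total_of_mem hγp hγq).elim (hp.not_anc_of_ne hq hpq) (hq.not_anc_of_ne hp hpq.symm)

lemma IsParent.anc_of_mem_of_mem {X : MaxClique G} {α β : V} (hαp : α ∈ p.1) (hβq : β ∈ q.1)
    (hαX : α ∈ X.1) (hβX : β ∈ X.1) : T.Anc X W := by
  rcases anc_total_of_mem hαX hαp with h | h
  · rcases hp.anc_iff.1 h with h | rfl
    · exact h
    · exact absurd hβq (hp.not_mem_of_mem hq hpq hβX)
  rcases anc_total_of_mem hβX hβq with h' | h'
  · rcases hq.anc_iff.1 h' with h' | rfl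
    · exact h'
    · exact absurd hαX (hp.not_mem_of_mem hq hpq hαp)
  · exact (hp.not_anc_of_anc hq hpq h h').elim

end Subtrees

lemma topDepth_le {γ : V} {Q : MaxClique G} (hQ : γ ∈ Q.1) : T.topDepth γ ≤ T.depth Q :=
  Nat.sInf_le ⟨Q, hQ, rfl⟩

lemma exists_depth_eq_topDepth (γ : V) :
    ∃ Q : MaxClique G, γ ∈ Q.1 ∧ T.depth Q = T.topDepth γ :=
  let ⟨Q, hQ⟩ := exists_maxClique_mem (G := G) γ
  Nat.sInf_mem (s := {n | ∃ Q : MaxClique G, γ ∈ Q.1 ∧ T.depth Q = n}) ⟨_, Q, hQ, rfl⟩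

lemma topDepth_lt_of_walk {t o z : V} {X Y : MaxClique G} (hXt : t ∈ X.1) (hYo : o ∈ Y.1)
    (hXY : T.Anc X Y) (w : G.Walk o z) (hw : ∀ x ∈ w.support, x ≠ t ∧ ¬ G.Adj t x) :
    T.topDepth t < T.topDepth z := by
  obtain ⟨R, hR, hRdepth⟩ := exists_depth_eq_topDepth (T := T) z
  have hXR : T.Anc X R := anc_of_walk w
    (fun x hx hxX => (hw x hx).2 (MaxClique.adj X hXt hxX (hw x hx).1.symm)) hYo hR hXY
  have hXR' : X ≠ R := by
    rintro rfl
    obtain ⟨hzt, hadj⟩ := hw z w.end_mem_support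
    exact hadj (MaxClique.adj X hXt hR hzt.symm)
  calc T.topDepth t ≤ T.depth X := topDepth_le hXt
    _ < T.depth R := hXR.depth_lt hXR'
    _ = T.topDepth z := hRdepth

lemma AncRelated.symm {u v : V} (h : T.AncRelated u v) : T.AncRelated v u :=
  let ⟨X, Y, hX, hY, hXY⟩ := h
  ⟨Y, X, hY, hX, hXY.symm⟩

lemma ancRelated_of_adj_of_adj {u v w : V} (hu : G.Adj u w) (hv : G.Adj v w) :
    T.AncRelated u v :=
  let ⟨X, hXu, hXw⟩ := exists_maxClique_mem_mem hu
  let ⟨Y, hYv, hYw⟩ := exists_maxClique_mem_mem hv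
  ⟨X, Y, hXu, hYv, anc_total_of_mem hXw hYw⟩

lemma AncRelated.topDepth_lt {u v z : V} (h : T.AncRelated u v)
    (hAT : IsAsteroidalTriple G u v z) :
    T.topDepth u < T.topDepth z ∨ T.topDepth v < T.topDepth z := by
  obtain ⟨-, -, -, -, -, -, -, ⟨wv, hwv⟩, ⟨wu, hwu⟩⟩ := hAT
  obtain ⟨X, Y, hX, hY, hXY | hYX⟩ := h
  · exact Or.inl (topDepth_lt_of_walk hX hY hXY wv hwv)
  · exact Or.inr (topDepth_lt_of_walk hY hX hYX wu hwu)

end CliqueRPT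

def HasExit (G : SimpleGraph V) (S : Set V) (a v : V) : Prop :=
  ∃ w, G.Adj a w ∧ ∃ e : G.Walk w v, ∀ γ ∈ e.support, γ ∈ S

lemma HasExit.mono {G : SimpleGraph V} {S S' : Set V} {a v : V} (h : HasExit G S a v)
    (hS : S ⊆ S') : HasExit G S' a v :=
  let ⟨w, hw, e, he⟩ := h
  ⟨w, hw, e, fun γ hγ => hS (he γ hγ)⟩

/-- `a ∈ W ∩ p` is where a walk of `P` coming from `u` enters `W`. -/
def IsPort {G : SimpleGraph V} (W p : MaxClique G) (P : Set V) (u a : V) : Prop :=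
  a ∈ W.1 ∧ a ∈ p.1 ∧ a ∈ P ∧ HasExit G (P \ W.1) a u

lemma IsPort.mono {G : SimpleGraph V} {W p : MaxClique G} {P P' : Set V} {u a : V}
    (h : IsPort W p P u a) (hP : P ⊆ P') : IsPort W p P' u a :=
  ⟨h.1, h.2.1, hP h.2.2.1, h.2.2.2.mono (Set.sdiff_subset_sdiff_left hP)⟩

section ChordlessPath

variable {G : SimpleGraph V} {n : ℕ} {x : Fin (n+1) → V}

lemma exists_walk_of_adj_succ (hx : ∀ i : Fin n, G.Adj (x i.castSucc) (x i.succ))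
    {i j : Fin (n+1)} (hij : i ≤ j) :
    ∃ w : G.Walk (x i) (x j), ∀ γ ∈ w.support, ∃ k, i ≤ k ∧ k ≤ j ∧ x k = γ := by
  induction j using Fin.induction with
  | zero =>
    rw [Fin.le_zero_iff.1 hij]
    exact ⟨Walk.nil, fun γ hγ => ⟨0, le_rfl, le_rfl, (List.mem_singleton.1 hγ).symm⟩⟩
  | succ k ih =>
    rcases hij.lt_or_eq with h | rfl
    · obtain ⟨w, hw⟩ := ih (Fin.le_castSucc_iff.2 h)
      refine ⟨w.concat (hx k), fun γ hγ => ?_⟩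
      rw [Walk.support_concat, List.mem_append, List.mem_singleton] at hγ
      rcases hγ with hγ | rfl
      · obtain ⟨m, h1, h2, rfl⟩ := hw γ hγ
        exact ⟨m, h1, h2.trans (Fin.castSucc_le_succ k), rfl⟩
      · exact ⟨k.succ, h.le, le_rfl, rfl⟩
    · exact ⟨Walk.nil, fun γ hγ => ⟨_, le_rfl, le_rfl, (List.mem_singleton.1 hγ).symm⟩⟩

variable (hx : IsChordlessPathFun G x)
include hx

lemma IsChordlessPathFun.adj_succ (i : Fin n) : G.Adj (x i.castSucc) (x i.succ) :=
  (hx.2 i.castSucc i.succ Fin.castSucc_lt_succ).2 rfl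

lemma IsChordlessPathFun.val_eq_of_adj {i j : Fin (n+1)} (h : G.Adj (x i) (x j)) :
    (j : ℕ) = i + 1 ∨ (i : ℕ) = j + 1 := by
  rcases lt_trichotomy i j with hij | rfl | hij
  · exact Or.inl ((hx.2 i j hij).1 h)
  · exact (h.ne rfl).elim
  · exact Or.inr ((hx.2 j i hij).1 h.symm)

lemma IsChordlessPathFun.eq_or_eq_of_mem (Q : MaxClique G) {i : Fin n} {k : Fin (n+1)}
    (hi : x i.castSucc ∈ Q.1) (hi' : x i.succ ∈ Q.1) (hk : x k ∈ Q.1) :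
    k = i.castSucc ∨ k = i.succ := by
  by_contra! h
  have h1 := hx.val_eq_of_adj (MaxClique.adj Q hk hi (hx.1.ne h.1))
  have h2 := hx.val_eq_of_adj (MaxClique.adj Q hk hi' (hx.1.ne h.2))
  rw [Ne, Fin.ext_iff, Ne, Fin.ext_iff] at h
  simp only [Fin.val_castSucc, Fin.val_succ] at h h1 h2
  omega

lemma IsChordlessPathFun.hasExit_last {S : Set V} {j : Fin (n+1)} (hj : j ≠ Fin.last n)
    (hS : ∀ k, j < k → x k ∈ S) : HasExit G S (x j) (x (Fin.last n)) := by
  obtain ⟨j, rfl⟩ := Fin.exists_castSucc_eq.2 hj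
  obtain ⟨e, he⟩ := exists_walk_of_adj_succ hx.adj_succ (Fin.le_last j.succ)
  refine ⟨_, hx.adj_succ j, e, fun γ hγ => ?_⟩
  obtain ⟨k, hk, -, rfl⟩ := he γ hγ
  exact hS k (Fin.castSucc_lt_succ.trans_le hk)

lemma IsChordlessPathFun.hasExit_zero {S : Set V} {j : Fin (n+1)} (hj : j ≠ 0)
    (hS : ∀ k, k < j → x k ∈ S) : HasExit G S (x j) (x 0) := by
  obtain ⟨j, rfl⟩ := Fin.exists_succ_eq.2 hj
  obtain ⟨e, he⟩ := exists_walk_of_adj_succ hx.adj_succ (Fin.zero_le j.castSucc)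
  refine ⟨_, (hx.adj_succ j).symm, e.reverse, Walk.forall_mem_support_reverse fun γ hγ => ?_⟩
  obtain ⟨k, -, hk, rfl⟩ := he γ hγ
  exact hS k (hk.trans_lt Fin.castSucc_lt_succ)

end ChordlessPath

namespace CliqueRPT

variable {G : SimpleGraph V} {T : CliqueRPT G}

variable (T) in
structure IsFork (u v : V) (W p q : MaxClique G) : Prop where
  parent_left : T.IsParent W p
  parent_right : T.IsParent W q
  ne : p ≠ q
  anc_left : ∀ X : MaxClique G, u ∈ X.1 → T.Anc p X
  anc_right : ∀ Y : MaxClique G, v ∈ Y.1 → T.Anc q Y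

lemma anc_of_not_ancRelated {u v : V} (h : ¬ T.AncRelated u v) {W p Qu Qv X : MaxClique G}
    (hWp : T.IsParent W p) (hpQu : T.Anc p Qu) (hWQv : T.Anc W Qv) (hu : u ∈ Qu.1)
    (hv : v ∈ Qv.1) (hX : u ∈ X.1) : T.Anc p X := by
  rcases anc_total_of_mem hu hX with hQuX | hXQu
  · exact hpQu.trans hQuX
  rcases anc_total_of_anc hXQu hpQu with hXp | hpX
  · rcases hWp.anc_iff.1 hXp with hXW | rfl
    · exact (h ⟨X, Qv, hX, hv, Or.inl (hXW.trans hWQv)⟩).elim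
    · exact anc_refl _
  · exact hpX

lemma exists_isFork {u v : V} (h : ¬ T.AncRelated u v) : ∃ W p q, T.IsFork u v W p q := by
  obtain ⟨Qu, hu⟩ := exists_maxClique_mem (G := G) u
  obtain ⟨Qv, hv⟩ := exists_maxClique_mem (G := G) v
  set S := {n | ∃ X, T.Anc X Qu ∧ T.Anc X Qv ∧ T.depth X = n}
  have hS : BddAbove S := ⟨T.depth Qu, fun _ ⟨X, hX, _, hn⟩ => hn ▸ hX.depth_le⟩
  obtain ⟨W, hWu, hWv, hW⟩ : sSup S ∈ S :=
    Nat.sSup_mem ⟨_, T.root, root_anc _, root_anc _, rfl⟩ hS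
  obtain ⟨p, hWp, hpu⟩ := exists_isParent_anc hWu fun hWQ =>
    h ⟨Qu, Qv, hu, hv, Or.inl (hWQ ▸ hWv)⟩
  obtain ⟨q, hWq, hqv⟩ := exists_isParent_anc hWv fun hWQ =>
    h ⟨Qu, Qv, hu, hv, Or.inr (hWQ ▸ hWu)⟩
  refine ⟨W, p, q, hWp, hWq, ?_, fun X => anc_of_not_ancRelated h hWp hpu hWv hu hv,
    fun Y => anc_of_not_ancRelated (mt AncRelated.symm h) hWq hqv hWu hv hu⟩
  rintro rfl
  have := hW ▸ le_csSup hS ⟨p, hpu, hqv, rfl⟩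
  rw [hWp.depth_eq] at this
  omega

namespace IsFork

variable {u v : V} {W p q : MaxClique G} (hF : T.IsFork u v W p q)
include hF

lemma left_not_mem : u ∉ W.1 := fun hu => hF.parent_left.not_anc (hF.anc_left W hu)

lemma right_not_mem : v ∉ W.1 := fun hv => hF.parent_right.not_anc (hF.anc_right W hv)

lemma not_mem_right {γ : V} (hγ : γ ∈ p.1) : γ ∉ q.1 :=
  hF.parent_left.not_mem_of_mem hF.parent_right hF.ne hγ

lemma exists_crossing {n : ℕ} {x : Fin (n+1) → V} (hx : IsChordlessPathFun G x)
    (hx0 : x 0 = u) (hxn : x (Fin.last n) = v) :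
    ∃ i : Fin n, x i.castSucc ∈ W.1 ∧ x i.castSucc ∈ p.1 ∧ x i.succ ∈ W.1 ∧ x i.succ ∈ q.1 := by
  obtain ⟨Qu, hu⟩ := exists_maxClique_mem (G := G) u
  obtain ⟨Qv, hv⟩ := exists_maxClique_mem (G := G) v
  have hpQu := hF.anc_left Qu hu
  obtain ⟨w, hw⟩ := exists_walk_of_adj_succ hx.adj_succ (Fin.zero_le (Fin.last n))
  obtain ⟨_, hγw, hbW, hbq⟩ := hF.parent_right.exists_mem_of_walk w (hx0 ▸ hu)
    (hF.parent_left.not_anc_of_anc hF.parent_right hF.ne hpQu) (hxn ▸ hv)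
    (hF.anc_right Qv hv)
  obtain ⟨b, -, -, rfl⟩ := hw _ hγw
  obtain ⟨w', hw'⟩ := exists_walk_of_adj_succ hx.adj_succ (Fin.zero_le b)
  obtain ⟨_, hγw', haW, hap⟩ := hF.parent_left.exists_mem_of_walk w'.reverse hbq
    (hF.parent_left.not_anc_of_ne hF.parent_right hF.ne) (hx0 ▸ hu) hpQu
  rw [Walk.support_reverse, List.mem_reverse] at hγw'
  obtain ⟨a, -, hab, rfl⟩ := hw' _ hγw'
  have hab : a < b := hab.lt_of_ne fun h => hF.not_mem_right hap (h ▸ hbq)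
  have hb := hx.val_eq_of_adj (MaxClique.adj W haW hbW (hx.1.ne hab.ne))
  obtain ⟨i, rfl⟩ := Fin.exists_castSucc_eq.2 (hab.trans_le (Fin.le_last b)).ne
  obtain rfl : b = i.succ := by
    rw [Fin.lt_def] at hab
    ext
    simp only [Fin.val_castSucc, Fin.val_succ] at hab hb ⊢
    omega
  exact ⟨i, haW, hap, hbW, hbq⟩

lemma exists_ports {n : ℕ} {x : Fin (n+1) → V} (hx : IsChordlessPathFun G x)
    (hx0 : x 0 = u) (hxn : x (Fin.last n) = v) :
    ∃ i : Fin n, IsPort W p (Set.range x) u (x i.castSucc) ∧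
      IsPort W q (Set.range x) v (x i.succ) := by
  obtain ⟨i, hiW, hip, hi'W, hi'q⟩ := hF.exists_crossing hx hx0 hxn
  have hout : ∀ k, k ≠ i.castSucc → k ≠ i.succ → x k ∈ Set.range x \ W.1 :=
    fun k h1 h2 => ⟨⟨k, rfl⟩, fun hk => (hx.eq_or_eq_of_mem W hiW hi'W hk).elim h1 h2⟩
  refine ⟨i, ⟨hiW, hip, ⟨_, rfl⟩, ?_⟩, ⟨hi'W, hi'q, ⟨_, rfl⟩, ?_⟩⟩
  · rw [← hx0]
    exact hx.hasExit_zero (fun h => hF.left_not_mem (hx0 ▸ h ▸ hiW))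
      fun k hk => hout k hk.ne (hk.trans Fin.castSucc_lt_succ).ne
  · rw [← hxn]
    exact hx.hasExit_last (fun h => hF.right_not_mem (hxn ▸ h ▸ hi'W))
      fun k hk => hout k (Fin.castSucc_lt_succ.trans hk).ne' hk.ne'

end IsFork

/-- Of the cliques through `z, l1, l2, r1` and through `z', l1, r1, r2`, both ancestors of `W`,
the lower one would contain `l2` resp. `r2`. -/
lemma IsParent.not_attach1 {W p q : MaxClique G} (hp : T.IsParent W p) (hq : T.IsParent W q)
    (hpq : p ≠ q) {Z : Set V} {l1 l2 r1 r2 : V} (hl1 : l1 ∈ W.1 ∩ p.1) (hl2 : l2 ∈ W.1)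
    (hr1 : r1 ∈ W.1 ∩ q.1) (hr2 : r2 ∈ W.1) (hl2Z : l2 ∉ Z) (hr2Z : r2 ∉ Z) :
    ¬ Attach1 G Z l1 l2 r1 r2 := by
  rintro ⟨z, hz, z', hz', -, -, hzl1, hzl2, hzr1, hzr2, hz'r1, hz'r2, hz'l1, hz'l2⟩
  obtain ⟨M, hzM, hM⟩ := exists_maxClique_insert W (a := z) (S := {l1, l2, r1})
    (by simp [Set.insert_subset_iff, hl1.1, hl2, hr1.1])
    (by rintro _ (rfl | rfl | rfl) - <;> assumption)
  obtain ⟨M', hz'M', hM'⟩ := exists_maxClique_insert W (a := z') (S := {l1, r1, r2})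
    (by simp [Set.insert_subset_iff, hl1.1, hr1.1, hr2])
    (by rintro _ (rfl | rfl | rfl) - <;> assumption)
  have hMW := hp.anc_of_mem_of_mem hq hpq hl1.2 hr1.2 (hM (by simp)) (hM (by simp))
  have hM'W := hp.anc_of_mem_of_mem hq hpq hl1.2 hr1.2 (hM' (by simp)) (hM' (by simp))
  rcases anc_total_of_anc hMW hM'W with h | h
  · exact hz'l2 (MaxClique.adj M' hz'M' (mem_of_anc_of_anc h hM'W (hM (by simp)) hl2)
      fun e => hl2Z (e ▸ hz'))
  · exact hzr2 (MaxClique.adj M hzM (mem_of_anc_of_anc h hMW (hM' (by simp)) hr2)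
      fun e => hr2Z (e ▸ hz))

/-- By `e2`, no clique of `v` lies below `M`, so the clique `N ⊇ {s1, w}` lies above `M`. If `N`
is below `q`, it is between `W'` and `M`, hence contains `ζ`, which would then see `w`;
otherwise `e1` would have to pass through `W ∩ q`. -/
lemma IsParent.not_anc_of_exit_walks {W q W' M : MaxClique G} (hWq : T.IsParent W q)
    (hW'W : T.Anc W' W) {v ζ s1 s2 w : V} (hv : ∀ Y : MaxClique G, v ∈ Y.1 → T.Anc q Y)
    (hζW' : ζ ∈ W'.1) (hζM : ζ ∈ M.1) (hs1q : s1 ∈ q.1) (hs1M : s1 ∈ M.1)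
    (hs2q : s2 ∈ q.1) (hs2W : s2 ∈ W.1) (hs2W' : s2 ∈ W'.1) (hs2M : s2 ∉ M.1)
    (hadj : G.Adj s1 w) (e1 : G.Walk w v)
    (he1 : ∀ γ ∈ e1.support, γ ∉ M.1 ∧ γ ∉ W.1 ∧ ¬ G.Adj ζ γ ∧ γ ≠ ζ)
    (e2 : G.Walk s2 v) (he2 : ∀ γ ∈ e2.support, γ ∉ M.1) : ¬ T.Anc W' M := by
  intro hW'M
  have hqM : T.Anc q M := by
    refine (anc_total_of_mem hs1q hs1M).resolve_right fun h => ?_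
    rcases hWq.anc_iff.1 h with h | rfl
    · exact hs2M (mem_of_anc_of_anc hW'M h hs2W' hs2W)
    · exact hs2M hs2q
  obtain ⟨Y, hY⟩ := exists_maxClique_mem (G := G) v
  have hMY : ¬ T.Anc M Y := fun h => hs2M <|
    (anc_of_walk e2.reverse (Walk.forall_mem_support_reverse he2) hY hs2q h).antisymm hqM ▸ hs2q
  obtain ⟨N, hNs1, hNw⟩ := exists_maxClique_mem_mem hadj
  obtain ⟨-, hwW, hζw, hwζ⟩ := he1 w e1.start_mem_support
  by_cases hqN : T.Anc q N
  · have hNM : T.Anc N M := (anc_total_of_mem hNs1 hs1M).resolve_right fun h =>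
      hMY (anc_of_walk e1 (fun γ hγ => (he1 γ hγ).1) hNw hY h)
    have hζN := mem_of_anc_of_anc ((hW'W.trans hWq.2).trans hqN) hNM hζW' hζM
    exact hζw (MaxClique.adj N hζN hNw hwζ.symm)
  · obtain ⟨γ, hγ, hγW, -⟩ := hWq.exists_mem_of_walk e1 hNw hqN hY (hv Y hY)
    exact (he1 γ hγ).2.1 hγW

lemma IsParent.anc_of_attachment {W q W' M : MaxClique G} (hWq : T.IsParent W q)
    (hW'W : T.Anc W' W) {P : Set V} {v ζ y s1 s2 : V}
    (hv : ∀ Y : MaxClique G, v ∈ Y.1 → T.Anc q Y) (hs1 : IsPort W q P v s1)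
    (hs2 : IsPort W q P v s2) (hs : s1 ≠ s2) (hs1W' : s1 ∈ W'.1) (hs1M : s1 ∈ M.1)
    (hs2W' : s2 ∈ W'.1) (hζW' : ζ ∈ W'.1) (hζM : ζ ∈ M.1) (hζP : ζ ∉ P)
    (hζ : ∀ γ ∈ P, G.Adj ζ γ → γ ∈ W.1) (hyM : y ∈ M.1) (hyP : y ∉ P)
    (hy : ∀ γ ∈ P, G.Adj y γ → γ = s1 ∨ γ = ζ) : T.Anc M W' := by
  refine (anc_total_of_mem hs1M hs1W').resolve_right ?_
  have hPM : ∀ γ ∈ P, γ ∈ M.1 → γ = s1 := fun γ hγP hγM =>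
    (hy γ hγP (MaxClique.adj M hyM hγM fun e => hyP (e ▸ hγP))).resolve_right
      fun e => hζP (e ▸ hγP)
  have hout : ∀ γ ∈ P \ W.1, γ ∉ M.1 := fun γ hγ hγM => hγ.2 (hPM γ hγ.1 hγM ▸ hs1.1)
  obtain ⟨w1, hadj1, e1, he1⟩ := hs1.2.2.2
  obtain ⟨w2, hadj2, e2, he2⟩ := hs2.2.2.2
  refine hWq.not_anc_of_exit_walks hW'W hv hζW' hζM hs1.2.1 hs1M hs2.2.1 hs2.1 hs2W'
    (fun h => hs (hPM s2 hs2.2.2.1 h).symm) hadj1 e1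
    (fun γ hγ => ⟨hout γ (he1 γ hγ), (he1 γ hγ).2, fun h => (he1 γ hγ).2 (hζ γ (he1 γ hγ).1 h),
      fun e => hζP (e ▸ (he1 γ hγ).1)⟩) (e2.cons hadj2) fun γ hγ => ?_
  rcases List.mem_cons.1 hγ with rfl | hγ
  · exact fun h => hs (hPM γ hs2.2.2.1 h).symm
  · exact hout γ (he2 γ hγ)

/-- Let `W'` contain the clique of the attachment and `M k ⊇ {z' k, z k, z (k+1)}`. The extreme
cliques `M 0 ∋ l1` and `M (2t+1) ∋ r1` are ancestors of `W'`; the lower of the two would then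
contain `r1` resp. `l1`, which `z' 0` resp. `z' (2t+1)` does not see. -/
lemma IsFork.not_attach2 {u v : V} {W p q : MaxClique G} (hF : T.IsFork u v W p q)
    {P Z : Set V} (hZP : Disjoint Z P) {l1 l2 r1 r2 : V} (hl1 : IsPort W p P u l1)
    (hl2 : IsPort W p P u l2) (hr1 : IsPort W q P v r1) (hr2 : IsPort W q P v r2)
    (hl : l1 ≠ l2) (hr : r1 ≠ r2) : ¬ Attach2 G Z P l1 l2 r1 r2 := by
  rintro ⟨t, z, z', hz0, hzl, -, -, hzZ, hz'Z, hC, hzP, -, hz'⟩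
  obtain ⟨W', hCW'⟩ := exists_maxClique_superset hC
  have hZP' : ∀ {γ}, γ ∈ Z → γ ∉ P := fun h => Set.disjoint_left.1 hZP h
  have hzC : ∀ k, z k ∈ ({l1, l2, r1, r2} ∪
      {w | ∃ k : Fin (2*t+3), k ≠ 0 ∧ k ≠ Fin.last (2*t+2) ∧ z k = w} : Set V) := by
    intro k
    by_cases h0 : k = 0
    · subst h0; rw [hz0]; exact Or.inl (by simp)
    by_cases hl' : k = Fin.last _
    · subst hl'; rw [hzl]; exact Or.inl (by simp)
    exact Or.inr ⟨k, h0, hl', rfl⟩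
  have hzW' : ∀ k, z k ∈ W'.1 := fun k => hCW' (hzC k)
  have hzW : ∀ k, k ≠ 0 → k ≠ Fin.last _ → ∀ γ ∈ P, G.Adj (z k) γ → γ ∈ W.1 := by
    intro k h0 hl γ hγ h
    rcases (hzP k h0 hl γ hγ).1 h with rfl | rfl | rfl | rfl
    exacts [hl1.1, hl2.1, hr1.1, hr2.1]
  choose M hz'M hM using fun k => exists_maxClique_insert W' (a := z' k)
    (S := {z k.castSucc, z k.succ}) (by simp [Set.insert_subset_iff, hzW'])
    (by rintro _ (rfl | rfl) - <;> simp [hz' k _ (Or.inr (hzC _))])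
  have hMc : ∀ k, z (Fin.castSucc k) ∈ (M k).1 := fun k => hM k (Set.mem_insert _ _)
  have hMs : ∀ k, z (Fin.succ k) ∈ (M k).1 := fun k => hM k (Set.mem_insert_of_mem _ rfl)
  have hPM : ∀ k, ∀ γ ∈ P, γ ∈ (M k).1 → γ = z k.castSucc ∨ γ = z k.succ :=
    fun k γ hγ hγM => (hz' k γ (Or.inl hγ)).1
      (MaxClique.adj (M k) (hz'M k) hγM fun e => hZP' (hz'Z k) (e ▸ hγ))
  set L := Fin.last (2*t+1)
  have h0 : (0 : Fin (2*t+2)).succ ≠ 0 := Fin.succ_ne_zero _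
  have h0' : (0 : Fin (2*t+2)).succ ≠ Fin.last _ := by simp [Fin.ext_iff]
  have hL : L.castSucc ≠ 0 := by simp [L, Fin.ext_iff]
  have hL' : L.castSucc ≠ Fin.last _ := (Fin.castSucc_lt_last _).ne
  have hz00 : z (0 : Fin (2*t+2)).castSucc = l1 := hz0
  have hzLL : z L.succ = r1 := by rw [Fin.succ_last]; exact hzl
  have hl1W' : l1 ∈ W'.1 := hz00 ▸ hzW' _
  have hr1W' : r1 ∈ W'.1 := hzLL ▸ hzW' _
  have hW'W : T.Anc W' W := hF.parent_left.anc_of_mem_of_mem hF.parent_right hF.ne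
    hl1.2.1 hr1.2.1 hl1W' hr1W'
  have h0M : T.Anc (M 0) W' := hF.parent_left.anc_of_attachment hW'W hF.anc_left hl1 hl2 hl
    hl1W' (hz00 ▸ hMc 0) (hCW' (Or.inl (by simp))) (hzW' _) (hMs 0) (hZP' (hzZ _ h0 h0'))
    (hzW _ h0 h0') (hz'M 0) (hZP' (hz'Z 0)) fun γ hγ h => hz00 ▸ (hz' 0 γ (Or.inl hγ)).1 h
  have hLM : T.Anc (M L) W' := hF.parent_right.anc_of_attachment hW'W hF.anc_right hr1 hr2 hr
    hr1W' (hzLL ▸ hMs L) (hCW' (Or.inl (by simp))) (hzW' _) (hMc L) (hZP' (hzZ _ hL hL'))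
    (hzW _ hL hL') (hz'M L) (hZP' (hz'Z L))
    fun γ hγ h => hzLL ▸ ((hz' L γ (Or.inl hγ)).1 h).symm
  have hlr : l1 ≠ r1 := fun e => hF.not_mem_right hl1.2.1 (e ▸ hr1.2.1)
  rcases anc_total_of_anc h0M hLM with h | h
  · rcases hPM L l1 hl1.2.2.1 (mem_of_anc_of_anc h hLM (hz00 ▸ hMc 0) hl1W') with e | e
    · exact hZP' (hzZ _ hL hL') (e ▸ hl1.2.2.1)
    · exact hlr (e.trans hzLL)
  · rcases hPM 0 r1 hr1.2.2.1 (mem_of_anc_of_anc h h0M (hzLL ▸ hMs L) hr1W') with e | e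
    · exact hlr (e.trans hz00).symm
    · exact hZP' (hzZ _ h0 h0') (e ▸ hr1.2.2.1)

lemma IsFork.not_attach {u v : V} {W p q : MaxClique G} (hF : T.IsFork u v W p q)
    {P Z : Set V} (hZP : Disjoint Z P) {l1 l2 r1 r2 : V} (hl1 : IsPort W p P u l1)
    (hl2 : IsPort W p P u l2) (hr1 : IsPort W q P v r1) (hr2 : IsPort W q P v r2)
    (hl : l1 ≠ l2) (hr : r1 ≠ r2) : ¬ (Attach1 G Z l1 l2 r1 r2 ∨ Attach2 G Z P l1 l2 r1 r2) :=
  not_or.2 ⟨hF.parent_left.not_attach1 hF.parent_right hF.ne ⟨hl1.1, hl1.2.1⟩ hl2.1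
    ⟨hr1.1, hr1.2.1⟩ hr2.1 (Set.disjoint_right.1 hZP hl2.2.2.1)
    (Set.disjoint_right.1 hZP hr2.2.2.1), hF.not_attach2 hZP hl1 hl2 hr1 hr2 hl hr⟩

variable (T) in
lemma _root_.LinkedByStrongPath.ancRelated {u v : V} (h : LinkedByStrongPath G u v) :
    T.AncRelated u v := by
  rcases h with ⟨w, hu, hv⟩ | ⟨r, s, -, -, x, y, Z, hx0, hxl, hy0, hyl, hx, hy, hxy, hZ, hsq⟩
  · exact ancRelated_of_adj_of_adj hu hv
  by_contra hne
  obtain ⟨W, p, q, hF⟩ := exists_isFork hne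
  obtain ⟨i, hxi, hxi'⟩ := hF.exists_ports hx hx0 hxl
  obtain ⟨j, hyj, hyj'⟩ := hF.exists_ports hy hy0 hyl
  have hi0 : i.castSucc ≠ 0 := fun h => hF.left_not_mem (hx0 ▸ h ▸ hxi.1)
  have hil : i.succ ≠ Fin.last (r+1) := fun h => hF.right_not_mem (hxl ▸ h ▸ hxi'.1)
  have hj0 : j.castSucc ≠ 0 := fun h => hF.left_not_mem (hy0 ▸ h ▸ hyj.1)
  have hjl : j.succ ≠ Fin.last (s+1) := fun h => hF.right_not_mem (hyl ▸ h ▸ hyj'.1)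
  have hne : x i.castSucc ≠ y j.castSucc :=
    hxy _ hi0 (Fin.castSucc_lt_last i).ne _ hj0 (Fin.castSucc_lt_last j).ne
  have hne' : x i.succ ≠ y j.succ := hxy _ (Fin.succ_ne_zero i) hil _ (Fin.succ_ne_zero j) hjl
  have hlr : ∀ {a b : V}, a ∈ p.1 → b ∈ q.1 → a ≠ b := fun ha hb e =>
    hF.not_mem_right ha (e ▸ hb)
  simp only [ne_eq, Fin.ext_iff, Fin.val_castSucc, Fin.val_succ, Fin.val_last,
    Fin.val_zero] at hi0 hil hj0 hjl
  obtain ⟨l1, l2, r1, r2, hL, hR, hA⟩ := hsq i j (by omega) (by omega) (by omega) (by omega)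
    (MaxClique.adj W hxi.1 hyj.1 hne) (MaxClique.adj W hxi.1 hyj'.1 (hlr hxi.2.1 hyj'.2.1))
    (MaxClique.adj W hxi'.1 hyj.1 (hlr hyj.2.1 hxi'.2.1).symm)
    (MaxClique.adj W hxi'.1 hyj'.1 hne')
  set P := Set.range x ∪ Set.range y
  have hZP : Disjoint Z P := Set.disjoint_iff_inter_eq_empty.2 hZ
  replace hxi := hxi.mono (P' := P) Set.subset_union_left
  replace hxi' := hxi'.mono (P' := P) Set.subset_union_left
  replace hyj := hyj.mono (P' := P) Set.subset_union_right
  replace hyj' := hyj'.mono (P' := P) Set.subset_union_right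
  rcases hL with ⟨rfl, rfl⟩ | ⟨rfl, rfl⟩ <;> rcases hR with ⟨rfl, rfl⟩ | ⟨rfl, rfl⟩
  · exact hF.not_attach hZP hxi hyj hxi' hyj' hne hne' hA
  · exact hF.not_attach hZP hxi hyj hyj' hxi' hne hne'.symm hA
  · exact hF.not_attach hZP hyj hxi hxi' hyj' hne.symm hne' hA
  · exact hF.not_attach hZP hyj hxi hyj' hxi' hne.symm hne'.symm hA

end CliqueRPT

section AsteroidalTriple

variable {G : SimpleGraph V} {a b c d : V}

lemma exists_walk_symm {P : V → Prop} (h : ∃ p : G.Walk a b, ∀ x ∈ p.support, P x) :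
    ∃ p : G.Walk b a, ∀ x ∈ p.support, P x :=
  let ⟨p, hp⟩ := h
  ⟨p.reverse, Walk.forall_mem_support_reverse hp⟩

lemma IsAsteroidalTriple.swap_right (h : IsAsteroidalTriple G a b c) :
    IsAsteroidalTriple G a c b :=
  let ⟨hab, hbc, hac, hab', hbc', hac', wab, wbc, wac⟩ := h
  ⟨hac, hbc.symm, hab, hac', fun h => hbc' h.symm, hab', wac, exists_walk_symm wbc, wab⟩

lemma IsAsteroidalTriple.rotate (h : IsAsteroidalTriple G a b c) : IsAsteroidalTriple G b c a :=
  let ⟨hab, hbc, hac, hab', hbc', hac', wab, wbc, wac⟩ := h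
  ⟨hbc, hac.symm, hab.symm, hbc', fun h => hac' h.symm, fun h => hab' h.symm, wbc,
    exists_walk_symm wac, exists_walk_symm wab⟩

lemma IsWeakAsteroidalTriple.exists_topDepth_lt (T : CliqueRPT G)
    (h : IsWeakAsteroidalTriple G a b c) (habd : IsAsteroidalTriple G a b d)
    (hbcd : IsAsteroidalTriple G b c d) (hacd : IsAsteroidalTriple G a c d) :
    T.topDepth a < T.topDepth d ∨ T.topDepth b < T.topDepth d ∨
      T.topDepth c < T.topDepth d := by
  rcases h.2 with h | h | h
  · have := (h.ancRelated T).topDepth_lt habd; omega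
  · have := (h.ancRelated T).topDepth_lt hbcd; omega
  · have := (h.ancRelated T).topDepth_lt hacd; omega

end AsteroidalTriple

theorem rootedPathGraph_no_weak_asteroidal_quadruple_general (G : SimpleGraph V)
    (hG : RootedPathGraph G) :
    ∀ a b c d : V, ¬ IsWeakAsteroidalQuadruple G a b c d := by
  rintro a b c d ⟨habc, habd, hacd, hbcd⟩
  obtain ⟨T⟩ := hG
  have hd := habc.exists_topDepth_lt T habd.1 hbcd.1 hacd.1
  have hc := habd.exists_topDepth_lt T habc.1 hbcd.1.swap_right hacd.1.swap_right
  have hb := hacd.exists_topDepth_lt T habc.1.swap_right hbcd.1.rotate habd.1.swap_right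
  have ha := hbcd.exists_topDepth_lt T habc.1.rotate hacd.1.rotate habd.1.rotate
  omega

/-- A rooted path graph contains no weak asteroidal quadruple. -/
theorem rootedPathGraph_no_weak_asteroidal_quadruple [Fintype V] (G : SimpleGraph V)
    (hG : RootedPathGraph G) :
    ∀ a b c d : V, ¬ IsWeakAsteroidalQuadruple G a b c d :=
  rootedPathGraph_no_weak_asteroidal_quadruple_general G hG
end

section
/- If a chordal graph contains a weak asteroidal quadruple but no strong asteroidal triple, then it contains a parallel asteroidal quadruple, i.e., an asteroidal quadruple z1, z2, z3, z4 such that z1 and z2 are linked by a strong path and z3 and z4 are linked by a strong path. -/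
open SimpleGraph

variable {V : Type*}

/-!
Among the four vertices of a weak asteroidal quadruple, the pairs linked by a strong path
meet every triple, since each triple is weak, and contain no triangle, since no triple is
strong. A set of edges of `K₄` meeting every triangle but containing none must contain a
perfect matching, and the two matched pairs give the parallel quadruple.
-/

namespace IsAsteroidalTriple

variable {G : SimpleGraph V} {a b c : V}

lemma swap_left (h : IsAsteroidalTriple G a b c) : IsAsteroidalTriple G b a c := by
  obtain ⟨hab, hbc, hac, nab, nbc, nac, ⟨p, hp⟩, hq, hr⟩ := h
  refine ⟨hab.symm, hac, hbc, fun h => nab h.symm, nac, nbc, ⟨p.reverse, ?_⟩, hr, hq⟩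
  intro x hx
  exact hp x (by simpa only [Walk.support_reverse, List.mem_reverse] using hx)

lemma swap_right_s19 (h : IsAsteroidalTriple G a b c) : IsAsteroidalTriple G a c b := by
  obtain ⟨hab, hbc, hac, nab, nbc, nac, hp, ⟨q, hq⟩, hr⟩ := h
  refine ⟨hac, hbc.symm, hab, nac, fun h => nbc h.symm, nab, hr, ⟨q.reverse, ?_⟩, hp⟩
  intro x hx
  exact hq x (by simpa only [Walk.support_reverse, List.mem_reverse] using hx)

end IsAsteroidalTriple

namespace IsAsteroidalQuadruple

variable {G : SimpleGraph V} {a b c d : V}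

lemma swap_middle (h : IsAsteroidalQuadruple G a b c d) : IsAsteroidalQuadruple G a c b d :=
  ⟨h.1.swap_right_s19, h.2.2.1, h.2.1, h.2.2.2.swap_left⟩

lemma swap_last (h : IsAsteroidalQuadruple G a b c d) : IsAsteroidalQuadruple G a b d c :=
  ⟨h.2.1, h.1, h.2.2.1.swap_right_s19, h.2.2.2.swap_right_s19⟩

end IsAsteroidalQuadruple

lemma IsWeakAsteroidalQuadruple.isAsteroidalQuadruple {G : SimpleGraph V} {a b c d : V}
    (h : IsWeakAsteroidalQuadruple G a b c d) : IsAsteroidalQuadruple G a b c d :=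
  ⟨h.1.1, h.2.1.1, h.2.2.1.1, h.2.2.2.1⟩

lemma perfect_matching_of_triangle_cover_of_triangle_free
    {Pab Pac Pad Pbc Pbd Pcd : Prop}
    (habc : Pab ∨ Pbc ∨ Pac) (habd : Pab ∨ Pbd ∨ Pad)
    (hacd : Pac ∨ Pcd ∨ Pad) (hbcd : Pbc ∨ Pcd ∨ Pbd)
    (nabc : ¬ (Pab ∧ Pbc ∧ Pac)) (nabd : ¬ (Pab ∧ Pbd ∧ Pad))
    (nacd : ¬ (Pac ∧ Pcd ∧ Pad)) (nbcd : ¬ (Pbc ∧ Pcd ∧ Pbd)) :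
    (Pab ∧ Pcd) ∨ (Pac ∧ Pbd) ∨ (Pad ∧ Pbc) := by
  grind

theorem weak_quadruple_gives_parallel_quadruple_general (G : SimpleGraph V)
    (hweak : ∃ a b c d : V, IsWeakAsteroidalQuadruple G a b c d)
    (hnostrong : ∀ a b c : V, ¬ IsStrongAsteroidalTriple G a b c) :
    ∃ z1 z2 z3 z4 : V, IsAsteroidalQuadruple G z1 z2 z3 z4 ∧
      LinkedByStrongPath G z1 z2 ∧ LinkedByStrongPath G z3 z4 := by
  obtain ⟨a, b, c, d, hweak⟩ := hweak
  have hquad := hweak.isAsteroidalQuadruple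
  have hnot : ∀ x y z, IsAsteroidalTriple G x y z →
      ¬ (LinkedByStrongPath G x y ∧ LinkedByStrongPath G y z ∧ LinkedByStrongPath G x z) :=
    fun x y z hxyz hlinks => hnostrong x y z ⟨hxyz, hlinks⟩
  obtain ⟨⟨-, habc⟩, ⟨-, habd⟩, ⟨-, hacd⟩, ⟨-, hbcd⟩⟩ := hweak
  rcases perfect_matching_of_triangle_cover_of_triangle_free habc habd hacd hbcd
      (hnot a b c hquad.1) (hnot a b d hquad.2.1) (hnot a c d hquad.2.2.1)
      (hnot b c d hquad.2.2.2) with ⟨hab, hcd⟩ | ⟨hac, hbd⟩ | ⟨had, hbc⟩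
  · exact ⟨a, b, c, d, hquad, hab, hcd⟩
  · exact ⟨a, c, b, d, hquad.swap_middle, hac, hbd⟩
  · exact ⟨a, d, b, c, hquad.swap_last.swap_middle, had, hbc⟩

/-- A chordal graph containing a weak asteroidal quadruple but no strong asteroidal
triple contains a parallel asteroidal quadruple. -/
theorem weak_quadruple_gives_parallel_quadruple [Fintype V] (G : SimpleGraph V)
    (hG : IsChordal G)
    (hweak : ∃ a b c d : V, IsWeakAsteroidalQuadruple G a b c d)
    (hnostrong : ∀ a b c : V, ¬ IsStrongAsteroidalTriple G a b c) :
    ∃ z1 z2 z3 z4 : V, IsAsteroidalQuadruple G z1 z2 z3 z4 ∧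
      LinkedByStrongPath G z1 z2 ∧ LinkedByStrongPath G z3 z4 :=
  weak_quadruple_gives_parallel_quadruple_general G hweak hnostrong
end
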